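/- If H is obtained from a chain graph G by a feasible split of a component, then H induces the same independence model as G: for all disjoint X, Y, Z, X ⫫_G Y | Z if and only if X ⫫_H Y | Z. -/

import Mathlib

/-- A hybrid graph over a vertex set `V`: it has directed edges (`dir`) and
undirected edges (`undir`, stored as a symmetric irreflexive relation). -/
structure HybridGraph (V : Type) where
  dir : V → V → Prop
  undir : V → V → Prop
  dir_irrefl : ∀ x, ¬ dir x x
  undir_irrefl : ∀ x, ¬ undir x x
  undir_symm : ∀ x y, undir x y → undir y x

namespace HybridGraph

variable {V : Type}

/-- Two nodes are adjacent if joined by a directed or undirected edge. -/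
def adj (G : HybridGraph V) (x y : V) : Prop :=
  G.dir x y ∨ G.dir y x ∨ G.undir x y

/-- One step of a descending route: `x − y` or `x → y`. -/
def descStep (G : HybridGraph V) (x y : V) : Prop := G.dir x y ∨ G.undir x y

/-- `y` is a descendant of `x`: there is a descending route from `x` to `y`
(routes of length zero allowed). -/
def descendant (G : HybridGraph V) : V → V → Prop :=
  Relation.ReflTransGen G.descStep

/-- There is an undirected route between `x` and `y` (length zero allowed). -/
def uconn (G : HybridGraph V) : V → V → Prop :=
  Relation.ReflTransGen G.undir

/-- A chain is modeled by a function `f : V → ℕ` assigning each node the index of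
its block.  `G` is consistent with the chain `f` if directed edges go strictly
left-to-right and undirected edges stay within a block. -/
def ConsistentWith (G : HybridGraph V) (f : V → ℕ) : Prop :=
  (∀ x y, G.dir x y → f x < f y) ∧ (∀ x y, G.undir x y → f x = f y)

/-- A chain graph is a hybrid graph consistent with some chain. -/
def IsChainGraph (G : HybridGraph V) : Prop := ∃ f : V → ℕ, G.ConsistentWith f

/-- The component (maximal undirected-connected set) containing `x`. -/
def component (G : HybridGraph V) (x : V) : Set V := {y | G.uconn x y}

def IsComponent (G : HybridGraph V) (C : Set V) : Prop := ∃ x, C = G.component x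

/-- The descendants of a set of nodes. -/
def descendantsOf (G : HybridGraph V) (S : Set V) : Set V :=
  {y | ∃ x ∈ S, G.descendant x y}

/-- A component is terminal if its set of descendants is exactly itself. -/
def IsTerminal (G : HybridGraph V) (C : Set V) : Prop := G.descendantsOf C = C

/-- Parents of a set of nodes. -/
def Pa (G : HybridGraph V) (S : Set V) : Set V := {x | ∃ y ∈ S, G.dir x y}

/-- Neighbors of a set of nodes. -/
def nbr (G : HybridGraph V) (S : Set V) : Set V := {x | ∃ y ∈ S, G.undir x y}

/-- Boundary of a node: parents together with neighbors. -/
def Bd (G : HybridGraph V) (x : V) : Set V := {y | G.dir y x ∨ G.undir y x}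

inductive EdgeKind | fwd | bwd | und
deriving DecidableEq

/-- A route in `G` of length `n`: nodes `φ 0, …, φ n`, where the `i`-th edge is
directed forwards, directed backwards, or undirected according to `kind i`. -/
structure Route (G : HybridGraph V) where
  n : ℕ
  φ : ℕ → V
  kind : ℕ → EdgeKind
  valid : ∀ i < n,
    (kind i = EdgeKind.fwd → G.dir (φ i) (φ (i+1))) ∧
    (kind i = EdgeKind.bwd → G.dir (φ (i+1)) (φ i)) ∧
    (kind i = EdgeKind.und → G.undir (φ i) (φ (i+1)))

namespace Route

variable {G : HybridGraph V}

/-- Positions `a ≤ k ≤ b` form a collider section of the route: a maximal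
undirected subroute entered by an arrowhead on both sides. -/
def ColliderSec (ρ : Route G) (a b : ℕ) : Prop :=
  a ≤ b ∧ b < ρ.n ∧ 0 < a ∧
  (∀ i, a ≤ i → i < b → ρ.kind i = EdgeKind.und) ∧
  ρ.kind (a-1) = EdgeKind.fwd ∧ ρ.kind b = EdgeKind.bwd

/-- Position `k` lies in a collider section of the route. -/
def ColliderPos (ρ : Route G) (k : ℕ) : Prop :=
  ∃ a b, a ≤ k ∧ k ≤ b ∧ ρ.ColliderSec a b

/-- A route is `Z`-active when every collider section has a node in `Z` and every
non-collider section has no node in `Z`. -/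
def ZActive (ρ : Route G) (Z : Set V) : Prop :=
  (∀ a b, ρ.ColliderSec a b → ∃ k, a ≤ k ∧ k ≤ b ∧ ρ.φ k ∈ Z) ∧
  (∀ k, k ≤ ρ.n → ¬ ρ.ColliderPos k → ρ.φ k ∉ Z)

end Route

/-- Separation `X ⫫_G Y | Z`: no `Z`-active route between a node of `X` and a
node of `Y`. -/
def Sep (G : HybridGraph V) (X Y Z : Set V) : Prop :=
  ¬ ∃ ρ : Route G, ρ.φ 0 ∈ X ∧ ρ.φ ρ.n ∈ Y ∧ ρ.ZActive Z

/-- `I(H) ⊆ I(G)`: every separation statement of `H` is one of `G`. -/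
def ModelLe (H G : HybridGraph V) : Prop :=
  ∀ X Y Z : Set V, Disjoint X Y → Disjoint X Z → Disjoint Y Z →
    H.Sep X Y Z → G.Sep X Y Z

/-- Result of splitting the component `C` into `C \ L` and `L`: every undirected
edge from `C \ L` to `L` becomes directed towards `L`. -/
def splitGraph (G : HybridGraph V) (C L : Set V) : HybridGraph V where
  dir x y := G.dir x y ∨ (x ∈ C \ L ∧ y ∈ L ∧ G.undir x y)
  undir x y := G.undir x y ∧ ¬((x ∈ C \ L ∧ y ∈ L) ∨ (y ∈ C \ L ∧ x ∈ L))
  dir_irrefl := by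
    intro x h
    rcases h with h | ⟨hx, hy, _⟩
    · exact G.dir_irrefl x h
    · exact hx.2 hy
  undir_irrefl := fun x h => G.undir_irrefl x h.1
  undir_symm := by
    intro x y h
    exact ⟨G.undir_symm x y h.1, fun hc => h.2 (Or.symm hc)⟩

/-- `H` is obtained from `G` by a feasible split of a component `C` into the two
nonempty connected parts `C \ L` and `L`. -/
def IsFeasibleSplit (G H : HybridGraph V) : Prop :=
  ∃ C L : Set V, G.IsComponent C ∧ L ⊆ C ∧ L.Nonempty ∧ (C \ L).Nonempty ∧
    (∀ x ∈ L, ∀ y ∈ L, G.uconn x y) ∧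
    (∀ x ∈ C \ L, ∀ y ∈ C \ L, G.uconn x y) ∧
    (∀ x ∈ G.nbr L ∩ (C \ L), ∀ y ∈ G.nbr L ∩ (C \ L), x ≠ y → G.undir x y) ∧
    (∀ x ∈ G.Pa L, ∀ y ∈ G.nbr L ∩ (C \ L), G.dir x y) ∧
    H = G.splitGraph C L

/-- Result of merging the components `L` and `R`: every directed edge from `L`
to `R` becomes undirected. -/
def mergeGraph (G : HybridGraph V) (L R : Set V) : HybridGraph V where
  dir x y := G.dir x y ∧ ¬(x ∈ L ∧ y ∈ R)
  undir x y := G.undir x y ∨ (x ∈ L ∧ y ∈ R ∧ G.dir x y) ∨ (y ∈ L ∧ x ∈ R ∧ G.dir y x)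
  dir_irrefl := fun x h => G.dir_irrefl x h.1
  undir_irrefl := by
    intro x h
    rcases h with h | ⟨_, _, h⟩ | ⟨_, _, h⟩
    · exact G.undir_irrefl x h
    · exact G.dir_irrefl x h
    · exact G.dir_irrefl x h
  undir_symm := by
    intro x y h
    rcases h with h | h | h
    · exact Or.inl (G.undir_symm x y h)
    · exact Or.inr (Or.inr h)
    · exact Or.inr (Or.inl h)

/-- `H` is obtained from `G` by a feasible merging of two components `L`, `R`. -/
def IsFeasibleMerge (G H : HybridGraph V) : Prop :=
  ∃ L R : Set V, G.IsComponent L ∧ G.IsComponent R ∧ L ≠ R ∧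
    (G.Pa R ∩ L).Nonempty ∧
    (∀ x ∈ G.Pa R ∩ L, ∀ y ∈ G.Pa R ∩ L, x ≠ y → G.undir x y) ∧
    (∀ x ∈ G.Pa R \ L, ∀ y ∈ G.Pa R ∩ L, G.dir x y) ∧
    H = G.mergeGraph L R

/-- `H` is obtained from `G` by adding a single (previously absent) directed or
undirected edge between two distinct nodes. -/
def IsEdgeAddition (G H : HybridGraph V) : Prop :=
  ∃ a b : V, a ≠ b ∧
    ((¬ G.dir a b ∧ (H.dir = fun x y => G.dir x y ∨ (x = a ∧ y = b)) ∧
        H.undir = G.undir) ∨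
     (¬ G.undir a b ∧ H.dir = G.dir ∧
        (H.undir = fun x y => G.undir x y ∨ (x = a ∧ y = b) ∨ (x = b ∧ y = a))))

/-- `H` is obtained from `G` by removing a single directed or undirected edge. -/
def IsEdgeRemoval (G H : HybridGraph V) : Prop :=
  ∃ a b : V,
    (G.dir a b ∧ (H.dir = fun x y => G.dir x y ∧ ¬(x = a ∧ y = b)) ∧
       H.undir = G.undir) ∨
    (G.undir a b ∧ H.dir = G.dir ∧
       (H.undir = fun x y => G.undir x y ∧ ¬((x = a ∧ y = b) ∨ (x = b ∧ y = a))))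

end HybridGraph

open HybridGraph

variable {V : Type}

/-- `X`, `Y`, `Z`, `W` are pairwise disjoint. -/
def PairwiseDisj (X Y Z W : Set V) : Prop :=
  Disjoint X Y ∧ Disjoint X Z ∧ Disjoint X W ∧
  Disjoint Y Z ∧ Disjoint Y W ∧ Disjoint Z W

/-- A graphoid: an independence model closed under symmetry, decomposition,
weak union, contraction and intersection (for pairwise disjoint arguments). -/
structure Graphoid (V : Type) where
  ind : Set V → Set V → Set V → Prop
  symm : ∀ X Y Z : Set V, Disjoint X Y → Disjoint X Z → Disjoint Y Z →
    ind X Y Z → ind Y X Z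
  decomp : ∀ X Y W Z : Set V, PairwiseDisj X Y Z W → ind X (Y ∪ W) Z → ind X Y Z
  weakUnion : ∀ X Y W Z : Set V, PairwiseDisj X Y Z W → ind X (Y ∪ W) Z →
    ind X Y (Z ∪ W)
  contraction : ∀ X Y W Z : Set V, PairwiseDisj X Y Z W → ind X Y (Z ∪ W) →
    ind X W Z → ind X (Y ∪ W) Z
  inter : ∀ X Y W Z : Set V, PairwiseDisj X Y Z W → ind X Y (Z ∪ W) →
    ind X W (Z ∪ Y) → ind X (Y ∪ W) Z

/-- `G` is an independence map of the model `M`: `I(G) ⊆ M`. -/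
def IsIMap (G : HybridGraph V) (M : Set V → Set V → Set V → Prop) : Prop :=
  ∀ X Y Z : Set V, Disjoint X Y → Disjoint X Z → Disjoint Y Z →
    G.Sep X Y Z → M X Y Z

/-- `Gα` is a minimal independence map of `M` relative to the chain `f`. -/
def IsMinIMapRel (M : Set V → Set V → Set V → Prop) (f : V → ℕ)
    (Gα : HybridGraph V) : Prop :=
  Gα.ConsistentWith f ∧ IsIMap Gα M ∧
    ∀ H : HybridGraph V, IsEdgeRemoval Gα H → ¬ IsIMap H M

/-!
A `Z`-active route is the same thing as a chain of sections, each a run of undirected edges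
closed by a directed edge, in which a section entered and left through arrowheads meets `Z` and
every other section avoids `Z`; both separation relations are compared through such chains.

The split only turns the undirected edges `s − l` between the border `S` of `L` and `L` into
arrows `s → l`. A chain of the split graph is followed in `G` by letting `G` wait at `s` while the
chain wanders inside `L` behind the new arrow. A chain of `G` is followed in the split graph by
cutting every excursion into `L` short along `S`, which is a clique, and by redirecting an arrow
from a parent of `L` to any node of `S`, which is a child of every such parent.
-/

namespace Relation.ReflTransGen

variable {α : Type*} {r : α → α → Prop} {a b : α}

theorem exists_seq (h : ReflTransGen r a b) :
    ∃ (m : ℕ) (f : ℕ → α), f 0 = a ∧ f m = b ∧ ∀ i < m, r (f i) (f (i + 1)) := by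
  induction h with
  | refl => exact ⟨0, fun _ => a, rfl, rfl, by simp⟩
  | @tail c d _ hcd ih =>
    obtain ⟨m, f, hf0, hfm, hf⟩ := ih
    refine ⟨m + 1, Function.update f (m + 1) d, by simp [hf0], by simp, fun i hi => ?_⟩
    rcases Nat.lt_succ_iff_lt_or_eq.mp hi with hi | rfl
    · simpa [Function.update_of_ne (by omega : i ≠ m + 1),
        Function.update_of_ne (by omega : i + 1 ≠ m + 1)] using hf i hi
    · simpa [hfm] using hcd

theorem of_seq {f : ℕ → α} {i j : ℕ} (hij : i ≤ j)
    (h : ∀ t, i ≤ t → t < j → r (f t) (f (t + 1))) : ReflTransGen r (f i) (f j) := by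
  induction j, hij using Nat.le_induction with
  | base => exact .refl
  | succ j hij ih => exact (ih fun t h₁ h₂ => h t h₁ (by omega)).tail (h j hij (by omega))

theorem and_of_between {P : α → Prop} (h : ReflTransGen r a b)
    (hP : ∀ c, ReflTransGen r a c → ReflTransGen r c b → P c) :
    ReflTransGen (fun x y => r x y ∧ P y) a b := by
  induction h with
  | refl => exact .refl
  | tail hac hcd ih =>
    exact (ih fun c h₁ h₂ => hP c h₁ (h₂.tail hcd)).tail ⟨hcd, hP _ (hac.tail hcd) .refl⟩

theorem exists_exit (s : Set α) (h : ReflTransGen r a b) (ha : a ∈ s) :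
    (b ∈ s ∧ ReflTransGen (fun x y => r x y ∧ x ∈ s ∧ y ∈ s) a b) ∨
      ∃ c d, ReflTransGen (fun x y => r x y ∧ x ∈ s ∧ y ∈ s) a c ∧ c ∈ s ∧ r c d ∧ d ∉ s ∧
        ReflTransGen r d b := by
  induction h using Relation.ReflTransGen.head_induction_on with
  | refl => exact Or.inl ⟨ha, .refl⟩
  | @head a c hac hcb ih =>
    by_cases hc : c ∈ s
    · rcases ih hc with ⟨hb, hin⟩ | ⟨c', d, h₁, h₂, h₃, h₄, h₅⟩
      · exact Or.inl ⟨hb, hin.head ⟨hac, ha, hc⟩⟩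
      · exact Or.inr ⟨c', d, h₁.head ⟨hac, ha, hc⟩, h₂, h₃, h₄, h₅⟩
    · exact Or.inr ⟨a, c, .refl, ha, hac, hc, hcb⟩

theorem exists_entry (s : Set α) (h : ReflTransGen r a b) (hb : b ∈ s) :
    (a ∈ s ∧ ReflTransGen (fun x y => r x y ∧ x ∈ s ∧ y ∈ s) a b) ∨
      ∃ c d, ReflTransGen r a c ∧ c ∉ s ∧ r c d ∧ d ∈ s ∧
        ReflTransGen (fun x y => r x y ∧ x ∈ s ∧ y ∈ s) d b := by
  induction h with
  | refl => exact Or.inl ⟨hb, .refl⟩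
  | @tail c d hac hcd ih =>
    by_cases hc : c ∈ s
    · rcases ih hc with ⟨ha, hin⟩ | ⟨c', d', h₁, h₂, h₃, h₄, h₅⟩
      · exact Or.inl ⟨ha, hin.tail ⟨hcd, hc, hb⟩⟩
      · exact Or.inr ⟨c', d', h₁, h₂, h₃, h₄, h₅.tail ⟨hcd, hc, hb⟩⟩
    · exact Or.inr ⟨c, d, hac, hc, hcd, hb, .refl⟩

end Relation.ReflTransGen

namespace HybridGraph

section Runs

variable {K K' : HybridGraph V} {Z : Set V} {u v w : V}

theorem uconn.symm (h : K.uconn u v) : K.uconn v u :=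
  haveI : Std.Symm K.undir := ⟨K.undir_symm⟩
  symm_of (Relation.ReflTransGen K.undir) h

def undirFrom (K : HybridGraph V) (Z : Set V) (a b : V) : Prop := K.undir a b ∧ a ∉ Z

def NoncolliderRun (K : HybridGraph V) (Z : Set V) (u v : V) : Prop :=
  Relation.ReflTransGen (K.undirFrom Z) u v ∧ v ∉ Z

def ColliderRun (K : HybridGraph V) (Z : Set V) (u v : V) : Prop :=
  ∃ z ∈ Z, K.uconn u z ∧ K.uconn z v

theorem NoncolliderRun.notMem_left (h : K.NoncolliderRun Z u v) : u ∉ Z := by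
  obtain ⟨h, hv⟩ := h
  rcases h.cases_head with rfl | ⟨c, hc, -⟩
  exacts [hv, hc.2]

theorem NoncolliderRun.tail (h : K.NoncolliderRun Z u v) (hvw : K.undir v w) (hw : w ∉ Z) :
    K.NoncolliderRun Z u w :=
  ⟨h.1.tail ⟨hvw, h.2⟩, hw⟩

theorem NoncolliderRun.uconn (h : K.NoncolliderRun Z u v) : K.uconn u v :=
  Relation.ReflTransGen.mono (fun _ _ hab => hab.1) _ _ h.1

theorem NoncolliderRun.mono (hle : ∀ a b, K.undir a b → K'.undir a b)
    (h : K.NoncolliderRun Z u v) : K'.NoncolliderRun Z u v :=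
  ⟨Relation.ReflTransGen.mono (fun a b hab => ⟨hle a b hab.1, hab.2⟩) _ _ h.1, h.2⟩

theorem noncolliderRun_iff :
    K.NoncolliderRun Z u v ↔
      u ∉ Z ∧ Relation.ReflTransGen (fun a b => K.undir a b ∧ b ∉ Z) u v := by
  constructor
  · intro h
    refine ⟨h.notMem_left, ?_⟩
    obtain ⟨h, hv⟩ := h
    induction h using Relation.ReflTransGen.head_induction_on with
    | refl => exact .refl
    | head hab hbv ih => exact ih.head ⟨hab.1, NoncolliderRun.notMem_left ⟨hbv, hv⟩⟩
  · rintro ⟨hu, h⟩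
    induction h with
    | refl => exact ⟨.refl, hu⟩
    | tail _ hbc ih => exact ih.tail hbc.1 hbc.2

theorem ColliderRun.trans_uconn (h : K.ColliderRun Z u v) (hvw : K.uconn v w) :
    K.ColliderRun Z u w :=
  let ⟨z, hz, huz, hzv⟩ := h
  ⟨z, hz, huz, hzv.trans hvw⟩

/-- A section of a `Z`-active route followed by the directed edge that closes it; the flag of a
state records whether its section was entered through an arrowhead. -/
inductive SectionStep (K : HybridGraph V) (Z : Set V) : V × Bool → V × Bool → Prop
  | tail {u v w : V} (h : Bool) :
      K.NoncolliderRun Z u v → K.dir v w → K.SectionStep Z (u, h) (w, true)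
  | head {u v w : V} : K.NoncolliderRun Z u v → K.dir w v → K.SectionStep Z (u, false) (w, false)
  | collider {u v w : V} : K.ColliderRun Z u v → K.dir w v → K.SectionStep Z (u, true) (w, false)

def Reaches (K : HybridGraph V) (Z : Set V) (x : V) (p : V × Bool) : Prop :=
  Relation.ReflTransGen (K.SectionStep Z) (x, false) p

def ActiveChain (K : HybridGraph V) (Z X Y : Set V) : Prop :=
  ∃ x ∈ X, ∃ p, K.Reaches Z x p ∧ ∃ y ∈ Y, K.NoncolliderRun Z p.1 y

end Runs

namespace Route

variable {K : HybridGraph V} {Z : Set V}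

section Sections

variable (ρ : Route K)

def IsSection (k e : ℕ) : Prop :=
  k ≤ e ∧ e ≤ ρ.n ∧ (∀ i, k ≤ i → i < e → ρ.kind i = .und) ∧
    (k = 0 ∨ ρ.kind (k - 1) ≠ .und) ∧ (e = ρ.n ∨ ρ.kind e ≠ .und)

def HeadEntered (k : ℕ) : Prop := 0 < k ∧ ρ.kind (k - 1) = .fwd

def IsCollider (k e : ℕ) : Prop := ρ.HeadEntered k ∧ e < ρ.n ∧ ρ.kind e = .bwd

def SectionActive (Z : Set V) (k e : ℕ) : Prop :=
  (ρ.IsCollider k e → ∃ j, k ≤ j ∧ j ≤ e ∧ ρ.φ j ∈ Z) ∧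
    (¬ ρ.IsCollider k e → ∀ j, k ≤ j → j ≤ e → ρ.φ j ∉ Z)

theorem exists_sectionStart (j : ℕ) :
    ∃ k ≤ j, (k = 0 ∨ ρ.kind (k - 1) ≠ .und) ∧ ∀ i, k ≤ i → i < j → ρ.kind i = .und := by
  induction j with
  | zero => exact ⟨0, le_rfl, Or.inl rfl, fun i h₁ h₂ => absurd h₂ (by omega)⟩
  | succ j ih =>
    by_cases hj : ρ.kind j = .und
    · obtain ⟨k, hk, hstart, hund⟩ := ih
      refine ⟨k, by omega, hstart, fun i h₁ h₂ => ?_⟩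
      rcases Nat.lt_succ_iff_lt_or_eq.mp h₂ with h₂ | rfl
      exacts [hund i h₁ h₂, hj]
    · exact ⟨j + 1, le_rfl, Or.inr hj, fun i h₁ h₂ => absurd h₂ (by omega)⟩

theorem exists_sectionEnd {j : ℕ} (hj : j ≤ ρ.n) :
    ∃ e, j ≤ e ∧ e ≤ ρ.n ∧ (e = ρ.n ∨ ρ.kind e ≠ .und) ∧
      ∀ i, j ≤ i → i < e → ρ.kind i = .und := by
  induction hj using Nat.decreasingInduction with
  | self => exact ⟨ρ.n, le_rfl, le_rfl, Or.inl rfl, fun i h₁ h₂ => absurd h₂ (by omega)⟩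
  | of_succ j hj ih =>
    by_cases hk : ρ.kind j = .und
    · obtain ⟨e, hje, hen, hend, hund⟩ := ih
      refine ⟨e, by omega, hen, hend, fun i h₁ h₂ => ?_⟩
      rcases Nat.eq_or_lt_of_le h₁ with rfl | h₁
      exacts [hk, hund i h₁ h₂]
    · exact ⟨j, le_rfl, hj.le, Or.inr hk, fun i h₁ h₂ => absurd h₂ (by omega)⟩

theorem exists_isSection_mem {j : ℕ} (hj : j ≤ ρ.n) :
    ∃ k e, ρ.IsSection k e ∧ k ≤ j ∧ j ≤ e := by
  obtain ⟨k, hkj, hstart, hund⟩ := ρ.exists_sectionStart j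
  obtain ⟨e, hje, hen, hend, hund'⟩ := ρ.exists_sectionEnd hj
  refine ⟨k, e, ⟨by omega, hen, fun i h₁ h₂ => ?_, hstart, hend⟩, hkj, hje⟩
  rcases lt_or_ge i j with hi | hi
  exacts [hund i h₁ hi, hund' i hi h₂]

theorem uconn_of_run {k e : ℕ} (hund : ∀ i, k ≤ i → i < e → ρ.kind i = .und) (hen : e ≤ ρ.n)
    {i j : ℕ} (hki : k ≤ i) (hij : i ≤ j) (hje : j ≤ e) : K.uconn (ρ.φ i) (ρ.φ j) :=
  .of_seq hij fun t h₁ h₂ => (ρ.valid t (by omega)).2.2 (hund t (by omega) (by omega))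

theorem noncolliderRun_of_run {k e : ℕ} (hund : ∀ i, k ≤ i → i < e → ρ.kind i = .und)
    (hen : e ≤ ρ.n) (hke : k ≤ e) (hZ : ∀ j, k ≤ j → j ≤ e → ρ.φ j ∉ Z) :
    K.NoncolliderRun Z (ρ.φ k) (ρ.φ e) :=
  ⟨.of_seq hke fun t h₁ h₂ =>
    ⟨(ρ.valid t (by omega)).2.2 (hund t h₁ h₂), hZ t h₁ h₂.le⟩, hZ e hke le_rfl⟩

variable {ρ}

theorem colliderSec_iff {a b : ℕ} :
    ρ.ColliderSec a b ↔ ρ.IsSection a b ∧ ρ.IsCollider a b := by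
  constructor
  · rintro ⟨hab, hbn, ha, hund, hf, hb⟩
    exact ⟨⟨hab, hbn.le, hund, Or.inr (by simp [hf]), Or.inr (by simp [hb])⟩, ⟨ha, hf⟩, hbn, hb⟩
  · rintro ⟨⟨hab, -, hund, -, -⟩, ⟨ha, hf⟩, hbn, hb⟩
    exact ⟨hab, hbn, ha, hund, hf, hb⟩

theorem IsSection.eq_of_overlap {k e k' e' : ℕ} (h : ρ.IsSection k e) (h' : ρ.IsSection k' e')
    (h₁ : k ≤ e') (h₂ : k' ≤ e) : k = k' ∧ e = e' := by
  have le_start : ∀ {k e k' e'}, ρ.IsSection k e → ρ.IsSection k' e' → k ≤ e' → k ≤ k' := by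
    rintro k e k' e' ⟨-, -, -, hk, -⟩ ⟨-, -, hund', -, -⟩ h₁
    by_contra hlt
    rcases hk with hk | hk
    · omega
    · exact hk (hund' _ (by omega) (by omega))
  have le_end : ∀ {k e k' e'}, ρ.IsSection k e → ρ.IsSection k' e' → k' ≤ e → e' ≤ e := by
    rintro k e k' e' ⟨-, -, -, -, he⟩ ⟨-, he', hund', -, -⟩ h₂
    by_contra hlt
    rcases he with he | he
    · omega
    · exact he (hund' _ h₂ (by omega))
  exact ⟨le_antisymm (le_start h h' h₁) (le_start h' h h₂),
    le_antisymm (le_end h' h h₁) (le_end h h' h₂)⟩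

theorem zActive_iff : ρ.ZActive Z ↔ ∀ k e, ρ.IsSection k e → ρ.SectionActive Z k e := by
  constructor
  · rintro ⟨hcol, hnon⟩ k e hke
    refine ⟨fun hc => hcol k e (colliderSec_iff.mpr ⟨hke, hc⟩),
      fun hc j hj₁ hj₂ => hnon j (hj₂.trans hke.2.1) ?_⟩
    rintro ⟨a, b, ha, hb, hab⟩
    obtain ⟨hsec, hcol'⟩ := colliderSec_iff.mp hab
    obtain ⟨rfl, rfl⟩ := hsec.eq_of_overlap hke (by omega) (by omega)
    exact hc hcol'
  · intro h
    refine ⟨fun a b hab => ?_, fun j hj hnot => ?_⟩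
    · obtain ⟨hsec, hc⟩ := colliderSec_iff.mp hab
      exact (h a b hsec).1 hc
    · obtain ⟨k, e, hke, hk, he⟩ := ρ.exists_isSection_mem hj
      exact (h k e hke).2 (fun hc => hnot ⟨k, e, hk, he, colliderSec_iff.mpr ⟨hke, hc⟩⟩) j hk he

theorem exists_sectionSteps (hZ : ρ.ZActive Z) {k : ℕ} (hk : k ≤ ρ.n)
    (hstart : k = 0 ∨ ρ.kind (k - 1) ≠ .und) {h : Bool} (hh : h = true ↔ ρ.HeadEntered k) :
    ∃ p, Relation.ReflTransGen (K.SectionStep Z) (ρ.φ k, h) p ∧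
      K.NoncolliderRun Z p.1 (ρ.φ ρ.n) := by
  induction hd : ρ.n - k using Nat.strong_induction_on generalizing k h with
  | _ d ih =>
  obtain ⟨e, hke, hen, hend, hund⟩ := ρ.exists_sectionEnd hk
  have hact := zActive_iff.mp hZ k e ⟨hke, hen, hund, hstart, hend⟩
  have hnc (hc : ¬ ρ.IsCollider k e) : K.NoncolliderRun Z (ρ.φ k) (ρ.φ e) :=
    ρ.noncolliderRun_of_run hund hen hke (hact.2 hc)
  by_cases hlast : e = ρ.n
  · subst hlast
    exact ⟨_, .refl, hnc fun hc => (lt_irrefl _ hc.2.1)⟩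
  have hen' : e < ρ.n := lt_of_le_of_ne hen hlast
  have hkind : ρ.kind e ≠ .und := hend.resolve_left hlast
  suffices hstep : ∃ h', K.SectionStep Z (ρ.φ k, h) (ρ.φ (e + 1), h') ∧
      (h' = true ↔ ρ.HeadEntered (e + 1)) by
    obtain ⟨h', hstep, hh'⟩ := hstep
    obtain ⟨p, hp, hrun⟩ :=
      ih (ρ.n - (e + 1)) (by omega) (by omega) (Or.inr (by simpa using hkind)) hh' rfl
    exact ⟨p, hp.head hstep, hrun⟩
  have hentered : ρ.HeadEntered (e + 1) ↔ ρ.kind e = .fwd := by simp [HeadEntered]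
  rcases hke' : ρ.kind e with _ | _ | _
  · refine ⟨true, .tail h (hnc fun hc => ?_) ((ρ.valid e hen').1 hke'), by simp [hentered, hke']⟩
    rw [hc.2.2] at hke'
    cases hke'
  · refine ⟨false, ?_, by simp [hentered, hke']⟩
    have hdir := (ρ.valid e hen').2.1 hke'
    cases h
    · exact .head (hnc fun hc => by simpa using hh.mpr hc.1) hdir
    · obtain ⟨j, hj₁, hj₂, hjZ⟩ := hact.1 ⟨hh.mp rfl, hen', hke'⟩
      exact .collider ⟨_, hjZ, ρ.uconn_of_run hund hen le_rfl hj₁ hj₂,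
        ρ.uconn_of_run hund hen hj₁ hj₂ le_rfl⟩ hdir
  · exact absurd hke' hkind

end Sections

section Append

def append (ρ σ : Route K) (h : ρ.φ ρ.n = σ.φ 0) : Route K where
  n := ρ.n + σ.n
  φ i := if i ≤ ρ.n then ρ.φ i else σ.φ (i - ρ.n)
  kind i := if i < ρ.n then ρ.kind i else σ.kind (i - ρ.n)
  valid i hi := by
    have hσ : ∀ j, ρ.n ≤ j → (if j ≤ ρ.n then ρ.φ j else σ.φ (j - ρ.n)) = σ.φ (j - ρ.n) := by
      intro j hj
      split_ifs with hj'
      · obtain rfl : j = ρ.n := le_antisymm hj' hj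
        simpa using h
      · rfl
    by_cases hi' : i < ρ.n
    · simpa [hi', Nat.succ_le_of_lt hi', hi'.le] using ρ.valid i hi'
    · rw [if_neg hi', hσ i (by omega), hσ (i + 1) (by omega), Nat.sub_add_comm (by omega)]
      exact σ.valid (i - ρ.n) (by omega)

variable (ρ σ : Route K) (h : ρ.φ ρ.n = σ.φ 0)

@[simp] theorem append_n : (ρ.append σ h).n = ρ.n + σ.n := rfl

theorem φ_append_of_le {i : ℕ} (hi : i ≤ ρ.n) : (ρ.append σ h).φ i = ρ.φ i := if_pos hi

theorem φ_append_of_ge {i : ℕ} (hi : ρ.n ≤ i) : (ρ.append σ h).φ i = σ.φ (i - ρ.n) := by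
  rcases Nat.eq_or_lt_of_le hi with rfl | hi
  · simpa [φ_append_of_le] using h
  · exact if_neg (by omega)

theorem kind_append_of_lt {i : ℕ} (hi : i < ρ.n) : (ρ.append σ h).kind i = ρ.kind i :=
  if_pos hi

theorem kind_append_of_ge {i : ℕ} (hi : ρ.n ≤ i) : (ρ.append σ h).kind i = σ.kind (i - ρ.n) :=
  if_neg (by omega)

variable {ρ σ h}

theorem IsSection.of_append {k e : ℕ} (h' : (ρ.append σ h).IsSection k e) (he : e < ρ.n) :
    ρ.IsSection k e := by
  obtain ⟨hke, -, hund, hstart, hend⟩ := h'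
  refine ⟨hke, he.le, fun i h₁ h₂ => ?_, ?_, Or.inr ?_⟩
  · rw [← kind_append_of_lt ρ σ h (by omega)]
    exact hund i h₁ h₂
  · refine hstart.imp_right fun hk => ?_
    rwa [kind_append_of_lt ρ σ h (i := k - 1) (by omega)] at hk
  · rcases hend with hend | hend
    · simp at hend; omega
    · rwa [kind_append_of_lt ρ σ h he] at hend

theorem SectionActive.append {k e : ℕ} (h' : ρ.SectionActive Z k e) (hke : k ≤ e)
    (he : e < ρ.n) : (ρ.append σ h).SectionActive Z k e := by
  have hcol : (ρ.append σ h).IsCollider k e ↔ ρ.IsCollider k e := by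
    simp only [IsCollider, HeadEntered, append_n, kind_append_of_lt ρ σ h he]
    rw [kind_append_of_lt ρ σ h (i := k - 1) (by omega)]
    simp only [he, show e < ρ.n + σ.n by omega]
  have hφ : ∀ j ≤ e, (ρ.append σ h).φ j = ρ.φ j := fun j hj => φ_append_of_le ρ σ h (by omega)
  refine ⟨fun hc => ?_, fun hc j hj₁ hj₂ => ?_⟩
  · obtain ⟨j, hj₁, hj₂, hjZ⟩ := h'.1 (hcol.mp hc)
    exact ⟨j, hj₁, hj₂, by rwa [hφ j hj₂]⟩
  · rw [hφ j hj₂]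
    exact h'.2 (mt hcol.mpr hc) j hj₁ hj₂

theorem isSection_append {m : ℕ} (hstart : ρ.n = 0 ∨ ρ.kind (ρ.n - 1) ≠ .und)
    (hσ : σ.IsSection 0 m) : (ρ.append σ h).IsSection ρ.n (ρ.n + m) := by
  obtain ⟨-, hm, hund, -, hend⟩ := hσ
  refine ⟨by omega, by simp [hm], fun i h₁ h₂ => ?_, ?_, ?_⟩
  · rw [kind_append_of_ge ρ σ h h₁]
    exact hund _ (Nat.zero_le _) (by omega)
  · rcases Nat.eq_zero_or_pos ρ.n with h0 | hpos
    · exact Or.inl h0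
    · right
      rw [kind_append_of_lt ρ σ h (i := ρ.n - 1) (by omega)]
      exact hstart.resolve_left hpos.ne'
  · rw [append_n, kind_append_of_ge ρ σ h (by omega), Nat.add_sub_cancel_left]
    exact hend.imp (by omega) id

end Append

def ofSeq (m : ℕ) (ψ : ℕ → V) (hψ : ∀ i < m, K.undir (ψ i) (ψ (i + 1))) : Route K where
  n := m
  φ := ψ
  kind _ := .und
  valid i hi := ⟨fun h => (by cases h), fun h => (by cases h), fun _ => hψ i hi⟩

def edge (b : Bool) (u w : V) (h : if b then K.dir u w else K.dir w u) : Route K where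
  n := 1
  φ i := if i = 0 then u else w
  kind _ := if b then .fwd else .bwd
  valid i hi := by
    obtain rfl : i = 0 := by omega
    cases b <;> simpa using h

theorem exists_undir_of_uconn {u v : V} (h : K.uconn u v) :
    ∃ μ : Route K, μ.φ 0 = u ∧ μ.φ μ.n = v ∧ ∀ i < μ.n, μ.kind i = .und := by
  obtain ⟨m, ψ, h0, hm, hψ⟩ := h.exists_seq
  exact ⟨ofSeq m ψ hψ, h0, hm, fun _ _ => rfl⟩

theorem exists_undir_of_noncolliderRun {u v : V} (h : K.NoncolliderRun Z u v) :
    ∃ μ : Route K, μ.φ 0 = u ∧ μ.φ μ.n = v ∧ (∀ i < μ.n, μ.kind i = .und) ∧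
      ∀ i ≤ μ.n, μ.φ i ∉ Z := by
  obtain ⟨m, ψ, h0, hm, hψ⟩ := h.1.exists_seq
  refine ⟨ofSeq m ψ fun i hi => (hψ i hi).1, h0, hm, fun _ _ => rfl, fun i hi => ?_⟩
  rcases Nat.eq_or_lt_of_le hi with rfl | hi
  exacts [by simpa [ofSeq, hm] using h.2, (hψ i hi).2]

theorem exists_undir_of_colliderRun {u v : V} (h : K.ColliderRun Z u v) :
    ∃ μ : Route K, μ.φ 0 = u ∧ μ.φ μ.n = v ∧ (∀ i < μ.n, μ.kind i = .und) ∧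
      ∃ j ≤ μ.n, μ.φ j ∈ Z := by
  obtain ⟨z, hz, huz, hzv⟩ := h
  obtain ⟨μ₁, h₁0, h₁n, h₁⟩ := exists_undir_of_uconn huz
  obtain ⟨μ₂, h₂0, h₂n, h₂⟩ := exists_undir_of_uconn hzv
  have hseam : μ₁.φ μ₁.n = μ₂.φ 0 := h₁n.trans h₂0.symm
  refine ⟨μ₁.append μ₂ hseam, by rw [φ_append_of_le _ _ _ (Nat.zero_le _), h₁0], ?_,
    fun i hi => ?_, μ₁.n, by simp, by rwa [φ_append_of_le _ _ _ le_rfl, h₁n]⟩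
  · rw [append_n, φ_append_of_ge _ _ _ (by omega), Nat.add_sub_cancel_left, h₂n]
  · rcases lt_or_ge i μ₁.n with hi' | hi'
    · rw [kind_append_of_lt _ _ _ hi', h₁ i hi']
    · rw [kind_append_of_ge _ _ _ hi', h₂ _ (by simp at hi; omega)]

/-- `ρ` runs from `x` to `p.1`, where a section starts that was entered through an arrowhead
iff `p.2`, and every earlier section is `Z`-active. -/
def ActivePrefix (Z : Set V) (x : V) (p : V × Bool) (ρ : Route K) : Prop :=
  ρ.φ 0 = x ∧ ρ.φ ρ.n = p.1 ∧ (ρ.n = 0 ∨ ρ.kind (ρ.n - 1) ≠ .und) ∧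
    (p.2 = true ↔ ρ.HeadEntered ρ.n) ∧
    ∀ k e, ρ.IsSection k e → e < ρ.n → ρ.SectionActive Z k e

variable {x : V} {p : V × Bool} {ρ : Route K}

theorem ActivePrefix.sectionActive_append (hρ : ρ.ActivePrefix Z x p) {τ : Route K}
    (h : ρ.φ ρ.n = τ.φ 0) {m : ℕ} (hτ : τ.IsSection 0 m)
    (hact : (ρ.append τ h).SectionActive Z ρ.n (ρ.n + m)) {k e : ℕ}
    (hke : (ρ.append τ h).IsSection k e) (he : e ≤ ρ.n + m) :
    (ρ.append τ h).SectionActive Z k e := by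
  by_cases hen : e < ρ.n
  · exact (hρ.2.2.2.2 k e (hke.of_append hen) hen).append hke.1 hen
  · have := hke.1
    obtain ⟨rfl, rfl⟩ := hke.eq_of_overlap (isSection_append hρ.2.2.1 hτ) (by omega) (by omega)
    exact hact

theorem ActivePrefix.extend (hρ : ρ.ActivePrefix Z x p) {μ : Route K} (hμ0 : μ.φ 0 = p.1)
    (hμ : ∀ i < μ.n, μ.kind i = .und) (b : Bool) (w : V)
    (hw : if b then K.dir (μ.φ μ.n) w else K.dir w (μ.φ μ.n))
    (hZ : p.2 = true ∧ b = false → ∃ j ≤ μ.n, μ.φ j ∈ Z)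
    (hnZ : ¬ (p.2 = true ∧ b = false) → ∀ j ≤ μ.n, μ.φ j ∉ Z) :
    ∃ ρ' : Route K, ρ'.ActivePrefix Z x (w, b) := by
  set τ := μ.append (edge b (μ.φ μ.n) w hw) (by simp [edge])
  have hseam : ρ.φ ρ.n = τ.φ 0 := by rw [φ_append_of_le _ _ _ (Nat.zero_le _), hμ0, hρ.2.1]
  set ρ' := ρ.append τ hseam
  have hτn : τ.n = μ.n + 1 := rfl
  have hn' : ρ'.n = ρ.n + μ.n + 1 := rfl
  have hlast : ρ'.n - 1 = ρ.n + μ.n := by omega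
  have hkind : ρ'.kind (ρ.n + μ.n) = if b then .fwd else .bwd := by
    rw [kind_append_of_ge _ _ _ (by omega), Nat.add_sub_cancel_left,
      kind_append_of_ge _ _ _ le_rfl]
    rfl
  have hτsec : τ.IsSection 0 μ.n := by
    refine ⟨Nat.zero_le _, by rw [hτn]; omega, fun i _ hi => ?_, Or.inl rfl, Or.inr ?_⟩
    · rw [kind_append_of_lt _ _ _ hi, hμ i hi]
    · rw [kind_append_of_ge _ _ _ le_rfl]
      cases b <;> simp [edge]
  have hφ : ∀ j ≤ μ.n, ρ'.φ (ρ.n + j) = μ.φ j := fun j hj => by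
    rw [φ_append_of_ge _ _ _ (by omega), Nat.add_sub_cancel_left, φ_append_of_le _ _ _ hj]
  have hcol : ρ'.IsCollider ρ.n (ρ.n + μ.n) ↔ p.2 = true ∧ b = false := by
    have hhead : ρ'.HeadEntered ρ.n ↔ ρ.HeadEntered ρ.n := by
      rcases Nat.eq_zero_or_pos ρ.n with h0 | hpos
      · simp [HeadEntered, h0]
      · simp only [HeadEntered]
        rw [kind_append_of_lt _ _ _ (i := ρ.n - 1) (by omega)]
    rw [IsCollider, hhead, ← hρ.2.2.2.1, hkind]
    cases b <;> simp [ρ', hτn]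
  have hact : ρ'.SectionActive Z ρ.n (ρ.n + μ.n) := by
    refine ⟨fun hc => ?_, fun hc j hj₁ hj₂ => ?_⟩
    · obtain ⟨j, hj, hjZ⟩ := hZ (hcol.mp hc)
      exact ⟨ρ.n + j, by omega, by omega, by rwa [hφ j hj]⟩
    · obtain ⟨j, rfl⟩ := Nat.exists_eq_add_of_le hj₁
      rw [hφ j (by omega)]
      exact hnZ (mt hcol.mpr hc) j (by omega)
  refine ⟨ρ', ?_, ?_, Or.inr ?_, ?_, fun k e hke he =>
    hρ.sectionActive_append hseam hτsec hact hke (by omega)⟩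
  · rw [φ_append_of_le _ _ _ (Nat.zero_le _), hρ.1]
  · rw [hn', φ_append_of_ge _ _ _ (by omega), show ρ.n + μ.n + 1 - ρ.n = μ.n + 1 by omega,
      φ_append_of_ge _ _ _ (by omega)]
    simp [edge]
  · rw [hlast, hkind]
    cases b <;> simp
  · simp only [HeadEntered]
    rw [hlast, hkind]
    cases b <;> simp [hn']

theorem ActivePrefix.finish (hρ : ρ.ActivePrefix Z x p) {μ : Route K} (hμ0 : μ.φ 0 = p.1)
    (hμ : ∀ i < μ.n, μ.kind i = .und) (hZ : ∀ j ≤ μ.n, μ.φ j ∉ Z) :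
    ∃ ρ' : Route K, ρ'.φ 0 = x ∧ ρ'.φ ρ'.n = μ.φ μ.n ∧ ρ'.ZActive Z := by
  have hseam : ρ.φ ρ.n = μ.φ 0 := by rw [hμ0, hρ.2.1]
  set ρ' := ρ.append μ hseam
  have hμsec : μ.IsSection 0 μ.n :=
    ⟨Nat.zero_le _, le_rfl, fun i _ hi => hμ i hi, Or.inl rfl, Or.inl rfl⟩
  have hact : ρ'.SectionActive Z ρ.n (ρ.n + μ.n) := by
    refine ⟨fun hc => absurd hc.2.1 (by simp [ρ']), fun _ j hj₁ hj₂ => ?_⟩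
    rw [φ_append_of_ge _ _ _ hj₁]
    exact hZ _ (by omega)
  refine ⟨ρ', by rw [φ_append_of_le _ _ _ (Nat.zero_le _), hρ.1], ?_, zActive_iff.mpr
    fun k e hke => hρ.sectionActive_append hseam hμsec hact hke hke.2.1⟩
  rw [append_n, φ_append_of_ge _ _ _ (by omega), Nat.add_sub_cancel_left]

end Route

section Chains

variable {K : HybridGraph V} {Z X Y : Set V}

theorem activeChain_of_route (ρ : Route K) (hX : ρ.φ 0 ∈ X) (hY : ρ.φ ρ.n ∈ Y)
    (hZ : ρ.ZActive Z) : K.ActiveChain Z X Y := by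
  obtain ⟨p, hp, hrun⟩ := ρ.exists_sectionSteps hZ (Nat.zero_le _) (Or.inl rfl)
    (h := false) (by simp [Route.HeadEntered])
  exact ⟨_, hX, p, hp, _, hY, hrun⟩

open Route in
theorem Reaches.exists_activePrefix {x : V} {p : V × Bool} (h : K.Reaches Z x p) :
    ∃ ρ : Route K, ρ.ActivePrefix Z x p := by
  induction h with
  | refl =>
    exact ⟨ofSeq 0 (fun _ => x) (by simp), rfl, rfl, Or.inl rfl, by simp [HeadEntered, ofSeq],
      fun k e _ he => absurd he (Nat.not_lt_zero e)⟩
  | tail _ hstep ih =>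
    obtain ⟨ρ, hρ⟩ := ih
    cases hstep with
    | tail h hrun hdir =>
      obtain ⟨μ, hμ0, hμn, hμ, hμZ⟩ := exists_undir_of_noncolliderRun hrun
      exact hρ.extend hμ0 hμ true _ (by simpa [hμn] using hdir) (by simp) fun _ => hμZ
    | head hrun hdir =>
      obtain ⟨μ, hμ0, hμn, hμ, hμZ⟩ := exists_undir_of_noncolliderRun hrun
      exact hρ.extend hμ0 hμ false _ (by simpa [hμn] using hdir) (by simp) fun _ => hμZ
    | collider hrun hdir =>
      obtain ⟨μ, hμ0, hμn, hμ, hμZ⟩ := exists_undir_of_colliderRun hrun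
      exact hρ.extend hμ0 hμ false _ (by simpa [hμn] using hdir) (fun _ => hμZ) (by simp)

theorem ActiveChain.exists_route (h : K.ActiveChain Z X Y) :
    ∃ ρ : Route K, ρ.φ 0 ∈ X ∧ ρ.φ ρ.n ∈ Y ∧ ρ.ZActive Z := by
  obtain ⟨x, hx, p, hp, y, hy, hrun⟩ := h
  obtain ⟨ρ, hρ⟩ := hp.exists_activePrefix
  obtain ⟨μ, hμ0, hμn, hμ, hμZ⟩ := Route.exists_undir_of_noncolliderRun hrun
  obtain ⟨ρ', h0, hn, hZ⟩ := hρ.finish hμ0 hμ hμZ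
  exact ⟨ρ', h0 ▸ hx, by rwa [hn, hμn], hZ⟩

theorem sep_iff_not_activeChain : K.Sep X Y Z ↔ ¬ K.ActiveChain Z X Y :=
  not_congr ⟨fun ⟨ρ, hX, hY, hZ⟩ => activeChain_of_route ρ hX hY hZ, fun h => h.exists_route⟩

end Chains

section Split

variable {G : HybridGraph V} {C L Z : Set V} {s u v w x : V}

def splitBorder (G : HybridGraph V) (C L : Set V) : Set V := G.nbr L ∩ (C \ L)

structure SplitAdmissible (G : HybridGraph V) (C L : Set V) : Prop where
  nbr_subset : G.nbr L ⊆ C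
  undir_of_mem_splitBorder :
    ∀ x ∈ G.splitBorder C L, ∀ y ∈ G.splitBorder C L, x ≠ y → G.undir x y
  dir_of_mem_pa : ∀ x ∈ G.Pa L, ∀ y ∈ G.splitBorder C L, G.dir x y

theorem nbr_subset_of_isComponent (hC : G.IsComponent C) (hLC : L ⊆ C) : G.nbr L ⊆ C := by
  obtain ⟨x₀, rfl⟩ := hC
  rintro a ⟨l, hl, hal⟩
  exact (hLC hl).tail (G.undir_symm a l hal)

theorem splitGraph_undir {a b : V} (h : G.undir a b) (hab : a ∈ L ↔ b ∈ L) :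
    (G.splitGraph C L).undir a b := by
  refine ⟨h, ?_⟩
  rintro (⟨ha, hb⟩ | ⟨hb, ha⟩)
  exacts [ha.2 (hab.mpr hb), hb.2 (hab.mp ha)]

theorem splitGraph_dir_of_dir {a b : V} (h : G.dir a b) : (G.splitGraph C L).dir a b := Or.inl h

theorem splitGraph_dir_cases {a b : V} (h : (G.splitGraph C L).dir a b) :
    G.dir a b ∨ (a ∈ G.splitBorder C L ∧ b ∈ L ∧ G.undir a b) :=
  h.imp_right fun ⟨ha, hb, hab⟩ => ⟨⟨⟨b, hb, hab⟩, ha⟩, hb, hab⟩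

theorem uconn_of_splitGraph (h : (G.splitGraph C L).uconn u v) : G.uconn u v :=
  Relation.ReflTransGen.mono (fun _ _ hab => hab.1) _ _ h

theorem NoncolliderRun.of_splitGraph (h : (G.splitGraph C L).NoncolliderRun Z u v) :
    G.NoncolliderRun Z u v :=
  NoncolliderRun.mono (fun a b (hab : (G.splitGraph C L).undir a b) => hab.1) h

theorem splitGraph_uconn_of_mem
    (h : Relation.ReflTransGen (fun a b => G.undir a b ∧ a ∈ L ∧ b ∈ L) u v) :
    (G.splitGraph C L).uconn u v :=
  Relation.ReflTransGen.mono (fun _ _ h => splitGraph_undir h.1 (iff_of_true h.2.1 h.2.2)) _ _ h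

theorem splitGraph_noncolliderRun_of_mem (hu : u ∉ Z)
    (h : Relation.ReflTransGen (fun a b => (G.undir a b ∧ b ∉ Z) ∧ a ∈ L ∧ b ∈ L) u v) :
    (G.splitGraph C L).NoncolliderRun Z u v :=
  noncolliderRun_iff.mpr ⟨hu, Relation.ReflTransGen.mono
    (fun _ _ h => ⟨splitGraph_undir h.1.1 (iff_of_true h.2.1 h.2.2), h.1.2⟩) _ _ h⟩

namespace SplitAdmissible

theorem mem_splitBorder (hs : G.SplitAdmissible C L) (h : G.undir s u) (hsL : s ∉ L) (hu : u ∈ L) :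
    s ∈ G.splitBorder C L :=
  ⟨⟨u, hu, h⟩, hs.nbr_subset ⟨u, hu, h⟩, hsL⟩

theorem splitGraph_dir (hs : G.SplitAdmissible C L) (h : G.undir s u) (hsL : s ∉ L) (hu : u ∈ L) :
    (G.splitGraph C L).dir s u :=
  Or.inr ⟨(hs.mem_splitBorder h hsL hu).2, hu, h⟩

theorem mem_iff_of_splitGraph_uconn (hs : G.SplitAdmissible C L)
    (h : (G.splitGraph C L).uconn u v) : u ∈ L ↔ v ∈ L := by
  induction h with
  | refl => exact Iff.rfl
  | @tail b c _ hbc ih =>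
    refine ih.trans ⟨fun hb => ?_, fun hc => ?_⟩ <;> by_contra hn <;> apply hbc.2
    · exact Or.inr ⟨(hs.mem_splitBorder (G.undir_symm _ _ hbc.1) hn hb).2, hb⟩
    · exact Or.inl ⟨(hs.mem_splitBorder hbc.1 hn hc).2, hc⟩

theorem noncolliderRun_splitBorder (hs : G.SplitAdmissible C L)
    (h : (G.splitGraph C L).NoncolliderRun Z u s)
    (hs₁ : s ∈ G.splitBorder C L) {s' : V} (hs₂ : s' ∈ G.splitBorder C L) (hs' : s' ∉ Z) :
    (G.splitGraph C L).NoncolliderRun Z u s' := by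
  obtain rfl | hne := eq_or_ne s s'
  · exact h
  · exact h.tail (splitGraph_undir (hs.undir_of_mem_splitBorder s hs₁ s' hs₂ hne)
      (iff_of_false hs₁.2.2 hs₂.2.2)) hs'

theorem reflTransGen_undirFrom_splitBorder (hs : G.SplitAdmissible C L)
    (h : Relation.ReflTransGen (G.undirFrom Z) u s)
    (hsZ : s ∉ Z) (hs₁ : s ∈ G.splitBorder C L) {s' : V} (hs₂ : s' ∈ G.splitBorder C L) :
    Relation.ReflTransGen (G.undirFrom Z) u s' := by
  obtain rfl | hne := eq_or_ne s s'
  · exact h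
  · exact h.tail ⟨hs.undir_of_mem_splitBorder s hs₁ s' hs₂ hne, hsZ⟩

end SplitAdmissible

/-- The split graph can follow, avoiding `Z`, a walk of `G` from `u₀` to `v` whose nodes outside
`L` avoid `Z`, by crossing the border clique wherever the walk makes an excursion into `L`. -/
def ShadowRun (G : HybridGraph V) (C L Z : Set V) (u₀ v : V) : Prop :=
  (v ∉ L ∧ (G.splitGraph C L).NoncolliderRun Z u₀ v) ∨
    (v ∈ L ∧ ∃ s ∈ G.splitBorder C L, (G.splitGraph C L).NoncolliderRun Z u₀ s)

theorem shadowRun_self (hu : u ∉ L) (huZ : u ∉ Z) : G.ShadowRun C L Z u u :=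
  Or.inl ⟨hu, .refl, huZ⟩

theorem ShadowRun.noncolliderRun {u₀ : V} (h : G.ShadowRun C L Z u₀ v) (hv : v ∉ L) :
    (G.splitGraph C L).NoncolliderRun Z u₀ v :=
  (h.resolve_right fun h => hv h.1).2

theorem SplitAdmissible.shadowRun_of_reflTransGen (hs : G.SplitAdmissible C L) {u₀ : V}
    (h₀ : G.ShadowRun C L Z u₀ u)
    (h : Relation.ReflTransGen (fun a b => G.undir a b ∧ (b ∉ L → b ∉ Z)) u v) :
    G.ShadowRun C L Z u₀ v := by
  induction h with
  | refl => exact h₀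
  | @tail a b _ hab ih =>
    obtain ⟨hab, hbZ⟩ := hab
    by_cases hb : b ∈ L
    · rcases ih with ⟨ha, hrun⟩ | ⟨-, hrest⟩
      exacts [Or.inr ⟨hb, a, hs.mem_splitBorder hab ha hb, hrun⟩, Or.inr ⟨hb, hrest⟩]
    · rcases ih with ⟨ha, hrun⟩ | ⟨ha, s, hsB, hrun⟩
      · exact Or.inl ⟨hb, hrun.tail (splitGraph_undir hab (iff_of_false ha hb)) (hbZ hb)⟩
      · exact Or.inl ⟨hb, hs.noncolliderRun_splitBorder hrun hsB
          (hs.mem_splitBorder (G.undir_symm _ _ hab) hb ha) (hbZ hb)⟩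

theorem ShadowRun.exists_dir (hs : G.SplitAdmissible C L) {u₀ : V} (h : G.ShadowRun C L Z u₀ v)
    (hd : G.dir w v) :
    ∃ t, (G.splitGraph C L).dir w t ∧ (G.splitGraph C L).NoncolliderRun Z u₀ t := by
  rcases h with ⟨-, hrun⟩ | ⟨hv, s, hsB, hrun⟩
  exacts [⟨v, splitGraph_dir_of_dir hd, hrun⟩,
    ⟨s, splitGraph_dir_of_dir (hs.dir_of_mem_pa w ⟨v, hv, hd⟩ s hsB), hrun⟩]

def BorderReachable (G : HybridGraph V) (C L Z : Set V) (x : V) : Prop :=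
  ∀ s ∈ G.splitBorder C L, (G.splitGraph C L).Reaches Z x (s, true)

namespace SplitAdmissible

theorem exists_reaches_of_head (hs : G.SplitAdmissible C L) {Z' : Set V}
    (hp : (G.splitGraph C L).Reaches Z x (w, true))
    (hB : w ∈ L → G.BorderReachable C L Z x)
    (h : Relation.ReflTransGen (fun a b => G.undir a b ∧ (b ∉ L → b ∉ Z')) w u)
    (hw : w ∉ L → w ∉ Z') (hu : u ∉ L) :
    ∃ u₀, (G.splitGraph C L).Reaches Z x (u₀, true) ∧
      (G.splitGraph C L).NoncolliderRun Z' u₀ u := by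
  by_cases hwL : w ∈ L
  · rcases h.exists_exit L hwL with ⟨huL, -⟩ | ⟨c, d, -, hc, hcd, hd, hdu⟩
    · exact absurd huL hu
    · exact ⟨d, hB hwL d (hs.mem_splitBorder (G.undir_symm _ _ hcd.1) hd hc),
        (hs.shadowRun_of_reflTransGen (shadowRun_self hd (hcd.2 hd)) hdu).noncolliderRun hu⟩
  · exact ⟨w, hp, (hs.shadowRun_of_reflTransGen (shadowRun_self hwL (hw hwL)) h).noncolliderRun hu⟩

theorem exists_reaches_of_not_mem (hs : G.SplitAdmissible C L) {h : Bool}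
    (hp : (G.splitGraph C L).Reaches Z x (w, h))
    (hB : h = true → w ∈ L → G.BorderReachable C L Z x) (hrun : G.NoncolliderRun Z w u)
    (hu : u ∉ L) :
    ∃ p, (G.splitGraph C L).Reaches Z x p ∧ p.2 = h ∧
      (G.splitGraph C L).NoncolliderRun Z p.1 u := by
  obtain ⟨hwZ, hpath⟩ := noncolliderRun_iff.mp hrun
  have hshadow : ∀ {a b : V}, Relation.ReflTransGen (fun a b => G.undir a b ∧ b ∉ Z) a b →
      Relation.ReflTransGen (fun a b => G.undir a b ∧ (b ∉ L → b ∉ Z)) a b :=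
    fun h => Relation.ReflTransGen.mono (fun _ _ h => ⟨h.1, fun _ => h.2⟩) _ _ h
  cases h
  · by_cases hwL : w ∈ L
    · rcases hpath.exists_exit L hwL with ⟨huL, -⟩ | ⟨c, d, hwc, hc, hcd, hd, hdu⟩
      · exact absurd huL hu
      · have hstep : (G.splitGraph C L).SectionStep Z (w, false) (d, false) :=
          .head (splitGraph_noncolliderRun_of_mem hwZ hwc)
            (hs.splitGraph_dir (G.undir_symm _ _ hcd.1) hd hc)
        exact ⟨(d, false), hp.tail hstep, rfl,
          (hs.shadowRun_of_reflTransGen (shadowRun_self hd hcd.2) (hshadow hdu)).noncolliderRun hu⟩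
    · exact ⟨(w, false), hp, rfl,
        (hs.shadowRun_of_reflTransGen (shadowRun_self hwL hwZ) (hshadow hpath)).noncolliderRun hu⟩
  · obtain ⟨u₀, hu₀, hrun'⟩ :=
      hs.exists_reaches_of_head hp (hB rfl) (hshadow hpath) (fun _ => hwZ) hu
    exact ⟨(u₀, true), hu₀, rfl, hrun'⟩

theorem exists_reaches_noncolliderRun (hs : G.SplitAdmissible C L) {h : Bool}
    (hp : (G.splitGraph C L).Reaches Z x (w, h))
    (hB : h = true → w ∈ L → G.BorderReachable C L Z x) (hrun : G.NoncolliderRun Z w v) :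
    ∃ q, (G.splitGraph C L).Reaches Z x q ∧ (G.splitGraph C L).NoncolliderRun Z q.1 v := by
  obtain ⟨hwZ, hpath⟩ := noncolliderRun_iff.mp hrun
  by_cases hv : v ∈ L
  · rcases hpath.exists_entry L hv with ⟨-, hin⟩ | ⟨c, d, hwc, hc, hcd, hd, hdv⟩
    · exact ⟨(w, h), hp, splitGraph_noncolliderRun_of_mem hwZ hin⟩
    · obtain ⟨p, hp', -, hpc⟩ :=
        hs.exists_reaches_of_not_mem hp hB (noncolliderRun_iff.mpr ⟨hwZ, hwc⟩) hc
      exact ⟨(d, true), hp'.tail (.tail _ hpc (hs.splitGraph_dir hcd.1 hc hd)),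
        splitGraph_noncolliderRun_of_mem hcd.2 hdv⟩
  · obtain ⟨p, hp', -, hpv⟩ := hs.exists_reaches_of_not_mem hp hB hrun hv
    exact ⟨p, hp', hpv⟩

theorem reaches_tail (hs : G.SplitAdmissible C L) {h : Bool}
    (hp : (G.splitGraph C L).Reaches Z x (w, h))
    (hB : h = true → w ∈ L → G.BorderReachable C L Z x) (hrun : G.NoncolliderRun Z w v)
    {w' : V} (hd : G.dir v w') :
    (G.splitGraph C L).Reaches Z x (w', true) ∧ (w' ∈ L → G.BorderReachable C L Z x) := by
  obtain ⟨q, hq, hqv⟩ := hs.exists_reaches_noncolliderRun hp hB hrun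
  exact ⟨hq.tail (.tail _ hqv (splitGraph_dir_of_dir hd)), fun hw' s hsB =>
    hq.tail (.tail _ hqv (splitGraph_dir_of_dir (hs.dir_of_mem_pa v ⟨w', hw', hd⟩ s hsB)))⟩

theorem reaches_head (hs : G.SplitAdmissible C L) (hp : (G.splitGraph C L).Reaches Z x (w, false))
    (hrun : G.NoncolliderRun Z w v) {w' : V} (hd : G.dir w' v) :
    (G.splitGraph C L).Reaches Z x (w', false) := by
  obtain ⟨hwZ, hpath⟩ := noncolliderRun_iff.mp hrun
  have hB : false = true → w ∈ L → G.BorderReachable C L Z x := fun h => absurd h (by simp)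
  by_cases hv : v ∈ L
  · rcases hpath.exists_entry L hv with ⟨-, hin⟩ | ⟨c, d, hwc, hc, hcd, hd', -⟩
    · exact hp.tail (.head (splitGraph_noncolliderRun_of_mem hwZ hin) (splitGraph_dir_of_dir hd))
    · obtain ⟨⟨p, _⟩, hp', rfl, hpc⟩ :=
        hs.exists_reaches_of_not_mem hp hB (noncolliderRun_iff.mpr ⟨hwZ, hwc⟩) hc
      exact hp'.tail (.head hpc (splitGraph_dir_of_dir
        (hs.dir_of_mem_pa w' ⟨v, hv, hd⟩ c (hs.mem_splitBorder hcd.1 hc hd'))))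
  · obtain ⟨⟨p, _⟩, hp', rfl, hpv⟩ := hs.exists_reaches_of_not_mem hp hB hrun hv
    exact hp'.tail (.head hpv (splitGraph_dir_of_dir hd))

theorem reaches_collider_of_not_mem (hs : G.SplitAdmissible C L)
    (hp : (G.splitGraph C L).Reaches Z x (w, true))
    (hB : w ∈ L → G.BorderReachable C L Z x) {z : V} (hz : z ∈ Z) (hzL : z ∉ L)
    (hwz : G.uconn w z) (hzv : G.uconn z v) {w' : V} (hd : G.dir w' v) :
    (G.splitGraph C L).Reaches Z x (w', false) := by
  have hfree : ∀ {a b : V}, G.uconn a b →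
      Relation.ReflTransGen (fun a b => G.undir a b ∧ (b ∉ L → b ∉ (∅ : Set V))) a b :=
    fun h => Relation.ReflTransGen.mono (fun _ _ h => ⟨h, fun _ => id⟩) _ _ h
  obtain ⟨u₀, hu₀, hu₀z⟩ := hs.exists_reaches_of_head hp hB (hfree hwz) (fun _ => id) hzL
  obtain ⟨t, hwt, hzt⟩ :=
    (hs.shadowRun_of_reflTransGen (shadowRun_self hzL id) (hfree hzv)).exists_dir hs hd
  exact hu₀.tail (.collider ⟨z, hz, hu₀z.uconn, hzt.uconn⟩ hwt)

theorem reaches_collider_of_forall_mem (hs : G.SplitAdmissible C L)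
    (hp : (G.splitGraph C L).Reaches Z x (w, true))
    (hB : w ∈ L → G.BorderReachable C L Z x)
    (hZ : ∀ c, G.uconn w c → G.uconn c v → c ∉ L → c ∉ Z) {z : V} (hz : z ∈ Z)
    (hwz : G.uconn w z) (hzv : G.uconn z v) {w' : V} (hd : G.dir w' v) :
    (G.splitGraph C L).Reaches Z x (w', false) := by
  have hzL : z ∈ L := by_contra fun hzL => hZ z hwz hzv hzL hz
  have hin : ∀ {a b : V}, Relation.ReflTransGen (fun a b => G.undir a b ∧ a ∈ L ∧ b ∈ L) a b →
      G.uconn a b := fun h => Relation.ReflTransGen.mono (fun _ _ h => h.1) _ _ h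
  -- The collider section of the split graph is the stretch of the walk inside `L` around `z`.
  obtain ⟨a, ha, haz⟩ : ∃ a, (G.splitGraph C L).Reaches Z x (a, true) ∧
      (G.splitGraph C L).uconn a z := by
    rcases hwz.exists_entry L hzL with ⟨-, hwz'⟩ | ⟨c, d, hwc, hc, hcd, hd', hdz⟩
    · exact ⟨w, hp, splitGraph_uconn_of_mem hwz'⟩
    · have hcv : G.uconn c v := ((hin hdz).head hcd).trans hzv
      obtain ⟨u₀, hu₀, hu₀c⟩ := hs.exists_reaches_of_head hp hB
        (hwc.and_of_between fun b hwb hbc => hZ b hwb (hbc.trans hcv))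
        (hZ w .refl (hwz.trans hzv)) hc
      exact ⟨d, hu₀.tail (.tail _ hu₀c (hs.splitGraph_dir hcd hc hd')),
        splitGraph_uconn_of_mem hdz⟩
  rcases hzv.exists_exit L hzL with ⟨-, hzv'⟩ | ⟨c, d, hzc, hc, hcd, hd', hdv⟩
  · exact ha.tail (.collider ⟨z, hz, haz, splitGraph_uconn_of_mem hzv'⟩ (splitGraph_dir_of_dir hd))
  · have hwd : G.uconn w d := (hwz.trans (hin hzc)).tail hcd
    have hstep : (G.splitGraph C L).SectionStep Z (a, true) (d, false) :=
      .collider ⟨z, hz, haz, splitGraph_uconn_of_mem hzc⟩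
        (hs.splitGraph_dir (G.undir_symm _ _ hcd) hd' hc)
    obtain ⟨t, hwt, hdt⟩ := (hs.shadowRun_of_reflTransGen
      (shadowRun_self hd' (hZ d hwd hdv hd'))
      (hdv.and_of_between fun b hdb hbv => hZ b (hwd.trans hdb) hbv)).exists_dir hs hd
    exact (ha.tail hstep).tail (.head hdt hwt)

theorem reaches_collider (hs : G.SplitAdmissible C L)
    (hp : (G.splitGraph C L).Reaches Z x (w, true))
    (hB : w ∈ L → G.BorderReachable C L Z x) (hrun : G.ColliderRun Z w v) {w' : V}
    (hd : G.dir w' v) : (G.splitGraph C L).Reaches Z x (w', false) := by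
  obtain ⟨z, hz, hwz, hzv⟩ := hrun
  by_cases hZ : ∀ c, G.uconn w c → G.uconn c v → c ∉ L → c ∉ Z
  · exact hs.reaches_collider_of_forall_mem hp hB hZ hz hwz hzv hd
  · push Not at hZ
    obtain ⟨c, hwc, hcv, hcL, hcZ⟩ := hZ
    exact hs.reaches_collider_of_not_mem hp hB hcZ hcL hwc hcv hd

theorem splitGraph_reaches (hs : G.SplitAdmissible C L) {p : V × Bool} (h : G.Reaches Z x p) :
    (G.splitGraph C L).Reaches Z x p ∧ (p.2 = true → p.1 ∈ L → G.BorderReachable C L Z x) := by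
  induction h with
  | refl => exact ⟨.refl, by simp⟩
  | tail _ hstep ih =>
    obtain ⟨hp, hB⟩ := ih
    cases hstep with
    | tail h hrun hd =>
      obtain ⟨h₁, h₂⟩ := hs.reaches_tail hp hB hrun hd
      exact ⟨h₁, fun _ => h₂⟩
    | head hrun hd => exact ⟨hs.reaches_head hp hrun hd, by simp⟩
    | collider hrun hd => exact ⟨hs.reaches_collider hp (hB rfl) hrun hd, by simp⟩

theorem activeChain_splitGraph (hs : G.SplitAdmissible C L) {X Y : Set V}
    (h : G.ActiveChain Z X Y) :
    (G.splitGraph C L).ActiveChain Z X Y := by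
  obtain ⟨x, hx, p, hp, y, hy, hrun⟩ := h
  obtain ⟨hp', hB⟩ := hs.splitGraph_reaches hp
  obtain ⟨q, hq, hqy⟩ := hs.exists_reaches_noncolliderRun hp' hB hrun
  exact ⟨x, hx, q, hq, y, hy, hqy⟩

end SplitAdmissible

/-- The ways `G` keeps pace with a chain of sections of the split graph that has reached `w`:
in step (`sync`), lagging behind inside its current section (`lag`), or waiting at a border
node `s` while the split graph has entered `L` through the new arrow `s → w` (`bypass`). -/
inductive Tracks (G : HybridGraph V) (C L Z : Set V) (x : V) : V × Bool → Prop
  | sync {w : V} : G.Reaches Z x (w, true) →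
      (w ∈ L → ∀ s ∈ G.splitBorder C L, G.Reaches Z x (s, true)) → G.Tracks C L Z x (w, true)
  | lag {q : V × Bool} {w : V} : G.Reaches Z x q → Relation.ReflTransGen (G.undirFrom Z) q.1 w →
      (q.2 = true → G.ColliderRun Z q.1 w) → G.Tracks C L Z x (w, false)
  | bypass {q : V × Bool} {w s : V} : G.Reaches Z x q → w ∈ L → s ∈ G.splitBorder C L → s ∉ Z →
      Relation.ReflTransGen (G.undirFrom Z) q.1 s → G.undir s w → G.Tracks C L Z x (w, true)

namespace Tracks

theorem exists_reaches {p : V × Bool} (h : G.Tracks C L Z x p) :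
    ∃ q, G.Reaches Z x q ∧ Relation.ReflTransGen (G.undirFrom Z) q.1 p.1 := by
  cases h with
  | sync hq _ => exact ⟨_, hq, .refl⟩
  | lag hq hqw _ => exact ⟨_, hq, hqw⟩
  | bypass hq _ _ hsZ hqs hsw => exact ⟨_, hq, hqs.tail ⟨hsw, hsZ⟩⟩

theorem tail (hs : G.SplitAdmissible C L) {h : Bool} (ht : G.Tracks C L Z x (u, h))
    (hrun : (G.splitGraph C L).NoncolliderRun Z u v) (hd : (G.splitGraph C L).dir v w) :
    G.Tracks C L Z x (w, true) := by
  obtain ⟨q, hq, hqu⟩ := ht.exists_reaches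
  have hqv : G.NoncolliderRun Z q.1 v := ⟨hqu.trans hrun.of_splitGraph.1, hrun.2⟩
  rcases splitGraph_dir_cases hd with hd | ⟨hvB, hwL, hvw⟩
  · exact .sync (hq.tail (.tail _ hqv hd)) fun hwL s hsB =>
      hq.tail (.tail _ hqv (hs.dir_of_mem_pa v ⟨w, hwL, hd⟩ s hsB))
  · exact .bypass hq hwL hvB hrun.2 hqv.1 hvw

theorem head (ht : G.Tracks C L Z x (u, false))
    (hrun : (G.splitGraph C L).NoncolliderRun Z u v) (hd : (G.splitGraph C L).dir w v) :
    G.Tracks C L Z x (w, false) := by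
  obtain _ | @⟨⟨q, b⟩, _, hq, hqu, hcol⟩ := ht
  have hrun' := hrun.of_splitGraph
  rcases splitGraph_dir_cases hd with hd | ⟨-, -, hwv⟩
  · have hstep : G.SectionStep Z (q, b) (w, false) := by
      cases b
      · exact .head ⟨hqu.trans hrun'.1, hrun.2⟩ hd
      · exact .collider ((hcol rfl).trans_uconn hrun'.uconn) hd
    exact .lag (q := (w, false)) (hq.tail hstep) .refl (by simp)
  · exact .lag hq ((hqu.trans hrun'.1).tail ⟨G.undir_symm _ _ hwv, hrun.2⟩)
      fun hb => (hcol hb).trans_uconn (hrun'.uconn.tail (G.undir_symm _ _ hwv))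

theorem collider (hs : G.SplitAdmissible C L) (ht : G.Tracks C L Z x (u, true))
    (hrun : (G.splitGraph C L).ColliderRun Z u v) (hd : (G.splitGraph C L).dir w v) :
    G.Tracks C L Z x (w, false) := by
  obtain ⟨z, hz, huz, hzv⟩ := hrun
  have hL : u ∈ L ↔ v ∈ L := hs.mem_iff_of_splitGraph_uconn (huz.trans hzv)
  have huz' := uconn_of_splitGraph huz
  have hzv' := uconn_of_splitGraph hzv
  cases ht with
  | sync hq hB =>
    rcases splitGraph_dir_cases hd with hd | ⟨hwB, hvL, hwv⟩
    · exact .lag (q := (w, false)) (hq.tail (.collider ⟨z, hz, huz', hzv'⟩ hd)) .refl (by simp)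
    · -- `G` enters `w` through an arrowhead instead; its section reaches `z` and returns.
      exact .lag (q := (w, true)) (hB (hL.mpr hvL) w hwB) .refl
        fun _ => ⟨z, hz, hzv'.symm.head hwv, hzv'.tail (G.undir_symm _ _ hwv)⟩
  | @bypass q _ s hq huL hsB hsZ hqs hsu =>
    obtain ⟨q, b⟩ := q
    have hqu : G.uconn q u := (Relation.ReflTransGen.mono (fun _ _ h => h.1) _ _ hqs).tail hsu
    rcases splitGraph_dir_cases hd with hd | ⟨hwB, -, hwv⟩
    · have hstep : G.SectionStep Z (q, b) (w, false) := by
        cases b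
        · exact .head ⟨hqs, hsZ⟩ (hs.dir_of_mem_pa w ⟨v, hL.mp huL, hd⟩ s hsB)
        · exact .collider ⟨z, hz, hqu.trans huz', hzv'⟩ hd
      exact .lag (q := (w, false)) (hq.tail hstep) .refl (by simp)
    · exact .lag hq (hs.reflTransGen_undirFrom_splitBorder hqs hsZ hsB hwB)
        fun _ => ⟨z, hz, hqu.trans huz', hzv'.tail (G.undir_symm _ _ hwv)⟩

end Tracks

namespace SplitAdmissible

theorem tracks (hs : G.SplitAdmissible C L) {p : V × Bool}
    (h : (G.splitGraph C L).Reaches Z x p) : G.Tracks C L Z x p := by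
  induction h with
  | refl => exact .lag (q := (x, false)) .refl .refl (by simp)
  | tail _ hstep ih =>
    cases hstep with
    | tail _ hrun hd => exact ih.tail hs hrun hd
    | head hrun hd => exact ih.head hrun hd
    | collider hrun hd => exact ih.collider hs hrun hd

theorem activeChain_of_splitGraph (hs : G.SplitAdmissible C L) {X Y : Set V}
    (h : (G.splitGraph C L).ActiveChain Z X Y) :
    G.ActiveChain Z X Y := by
  obtain ⟨x, hx, p, hp, y, hy, hrun⟩ := h
  obtain ⟨q, hq, hqp⟩ := (hs.tracks hp).exists_reaches
  exact ⟨x, hx, q, hq, y, hy, hqp.trans hrun.of_splitGraph.1, hrun.2⟩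

theorem sep_splitGraph_iff (hs : G.SplitAdmissible C L) {X Y : Set V} :
    (G.splitGraph C L).Sep X Y Z ↔ G.Sep X Y Z := by
  rw [sep_iff_not_activeChain, sep_iff_not_activeChain]
  exact not_congr ⟨hs.activeChain_of_splitGraph, hs.activeChain_splitGraph⟩

end SplitAdmissible

end Split

end HybridGraph

theorem feasibleSplit_sep_iff_general (G H : HybridGraph V)
    (hsplit : IsFeasibleSplit G H) :
    ∀ X Y Z : Set V, Disjoint X Y → Disjoint X Z → Disjoint Y Z →
      (G.Sep X Y Z ↔ H.Sep X Y Z) := by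
  obtain ⟨C, L, hC, hLC, -, -, -, -, hclique, hpa, rfl⟩ := hsplit
  have hs : G.SplitAdmissible C L := ⟨nbr_subset_of_isComponent hC hLC, hclique, hpa⟩
  intro X Y Z _ _ _
  exact hs.sep_splitGraph_iff.symm

/-- a feasible split preserves the induced independence model. -/
theorem feasibleSplit_sep_iff [Fintype V] (G H : HybridGraph V)
    (hG : G.IsChainGraph) (hsplit : IsFeasibleSplit G H) :
    ∀ X Y Z : Set V, Disjoint X Y → Disjoint X Z → Disjoint Y Z →
      (G.Sep X Y Z ↔ H.Sep X Y Z) :=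
  feasibleSplit_sep_iff_general G H hsplit
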